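/- arXiv:2406.08125 — 5 statements merged into one kernel-verified Lean document; each statement's English description precedes it below -/
import Mathlib

section
/- For a discrete single-parameter auction with finite value sets, the dominant-strategy incentive compatibility conditions (truthful bidding beats every alternative bid, for every bidder, every true value, and every fixed profile of others' bids) are equivalent to the local downward and upward incentive constraints between adjacent values holding for every bidder and every value profile. -/
/-- Abstract single-bidder lemma: local downward and upward IC constraints imply
global IC, for value function `vi`, allocation `A`, payment `P` indexed by `Fin K`. -/
lemma local_to_global_ic {K : ℕ} (vi A P : Fin K → ℝ) (hv : StrictMono vi)
    (hd : ∀ (k : Fin K) (h : k.val + 1 < K),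
      vi ⟨k.val + 1, h⟩ * A ⟨k.val + 1, h⟩ - P ⟨k.val + 1, h⟩
        ≥ vi ⟨k.val + 1, h⟩ * A k - P k)
    (hu : ∀ (k : Fin K) (h : k.val + 1 < K),
      vi k * A k - P k ≥ vi k * A ⟨k.val + 1, h⟩ - P ⟨k.val + 1, h⟩) :
    ∀ k k' : Fin K, vi k * A k - P k ≥ vi k * A k' - P k' := by
  -- allocation monotone on adjacent steps
  have hstep : ∀ (k : Fin K) (h : k.val + 1 < K), A k ≤ A ⟨k.val + 1, h⟩ := by
    intro k h
    have h1 := hd k h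
    have h2 := hu k h
    have hvlt : vi k < vi ⟨k.val + 1, h⟩ := hv (by simp [Fin.lt_def])
    nlinarith
  -- downward chains
  have D : ∀ (d : ℕ) (k' : Fin K) (h : k'.val + d < K),
      vi ⟨k'.val + d, h⟩ * A ⟨k'.val + d, h⟩ - P ⟨k'.val + d, h⟩
        ≥ vi ⟨k'.val + d, h⟩ * A k' - P k' := by
    intro d
    induction d with
    | zero => intro k' h; simp
    | succ d ih =>
        intro k' h
        have h1 : k'.val + 1 < K := by omega
        have ih' := ih ⟨k'.val + 1, h1⟩ (by simpa [Nat.add_assoc, Nat.add_comm 1 d] using h)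
        have hd' := hd k' h1
        have hA := hstep k' h1
        have hvle : vi ⟨k'.val + 1, h1⟩ ≤ vi ⟨k'.val + (d + 1), h⟩ := by
          apply hv.le_iff_le.mpr; simp [Fin.le_def]
        have key : vi ⟨k'.val + (d + 1), h⟩ * A ⟨k'.val + 1, h1⟩ - P ⟨k'.val + 1, h1⟩
            ≥ vi ⟨k'.val + (d + 1), h⟩ * A k' - P k' := by nlinarith
        have : (⟨k'.val + 1 + d, by omega⟩ : Fin K) = ⟨k'.val + (d + 1), h⟩ := by
          apply Fin.ext; simp; omega
        rw [this] at ih'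
        linarith
  -- upward chains
  have U : ∀ (d : ℕ) (k : Fin K) (h : k.val + d < K),
      vi k * A k - P k ≥ vi k * A ⟨k.val + d, h⟩ - P ⟨k.val + d, h⟩ := by
    intro d
    induction d with
    | zero => intro k h; simp
    | succ d ih =>
        intro k h
        have hdK : k.val + d < K := by omega
        have ih' := ih k hdK
        have h1 : (⟨k.val + d, hdK⟩ : Fin K).val + 1 < K := by simp; omega
        have hu' := hu ⟨k.val + d, hdK⟩ h1
        have hA := hstep ⟨k.val + d, hdK⟩ h1
        have hvle : vi k ≤ vi ⟨k.val + d, hdK⟩ := by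
          apply hv.le_iff_le.mpr; simp [Fin.le_def]
        have : (⟨(⟨k.val + d, hdK⟩ : Fin K).val + 1, h1⟩ : Fin K)
            = ⟨k.val + (d + 1), h⟩ := by apply Fin.ext; simp; omega
        rw [this] at hu' hA
        nlinarith
  intro k k'
  rcases le_or_gt k'.val k.val with hle | hlt
  · have := D (k.val - k'.val) k' (by omega)
    have he : (⟨k'.val + (k.val - k'.val), by omega⟩ : Fin K) = k := by
      apply Fin.ext; simp; omega
    rwa [he] at this
  · have := U (k'.val - k.val) k (by omega)
    have he : (⟨k.val + (k'.val - k.val), by omega⟩ : Fin K) = k' := by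
      apply Fin.ext; simp; omega
    rwa [he] at this


/-- DSIC (truthful bidding beats every alternative bid, for every bidder,
true value, and fixed profile of others' bids) is equivalent to the local downward and
upward incentive constraints between adjacent values. -/
theorem dsic_iff_local_ic
    {n : ℕ} (K : Fin n → ℕ) (v : ∀ i, Fin (K i) → ℝ)
    (hv : ∀ i, StrictMono (v i)) (hv0 : ∀ i k, 0 ≤ v i k)
    (a : (∀ i, Fin (K i)) → Fin n → ℝ) (p : (∀ i, Fin (K i)) → Fin n → ℝ) :
    -- DSIC: for all i, true value v_i (index k), alternative bid b_i (index k'),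
    -- and others' bids b_{-i} (encoded by the profile b, overwritten at i)
    (∀ (i : Fin n) (b : ∀ j, Fin (K j)) (k k' : Fin (K i)),
        v i k * a (Function.update b i k) i - p (Function.update b i k) i
          ≥ v i k * a (Function.update b i k') i - p (Function.update b i k') i)
    ↔
    -- local downward constraints
    ((∀ (i : Fin n) (b : ∀ j, Fin (K j)) (k : Fin (K i)) (h : k.val + 1 < K i),
        v i ⟨k.val + 1, h⟩ * a (Function.update b i ⟨k.val + 1, h⟩) i
            - p (Function.update b i ⟨k.val + 1, h⟩) i
          ≥ v i ⟨k.val + 1, h⟩ * a (Function.update b i k) i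
            - p (Function.update b i k) i)
      ∧
      -- local upward constraints
      (∀ (i : Fin n) (b : ∀ j, Fin (K j)) (k : Fin (K i)) (h : k.val + 1 < K i),
        v i k * a (Function.update b i k) i - p (Function.update b i k) i
          ≥ v i k * a (Function.update b i ⟨k.val + 1, h⟩) i
            - p (Function.update b i ⟨k.val + 1, h⟩) i)) := by
  constructor
  · intro hdsic
    exact ⟨fun i b k h => hdsic i b ⟨k.val + 1, h⟩ k,
           fun i b k h => hdsic i b k ⟨k.val + 1, h⟩⟩
  · rintro ⟨hd, hu⟩ i b k k'
    exact local_to_global_ic (v i)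
      (fun m => a (Function.update b i m) i) (fun m => p (Function.update b i m) i)
      (hv i) (fun m h => hd i b m h) (fun m h => hu i b m h) k k'
end

section
/- Fix a strictly increasing finite value sequence v_1 < … < v_K with pmf f(k) > 0 and cdf F(k) = ∑_{j≤k} f(j). Let φ(k) = v_k − (v_{k+1} − v_k)·(1 − F(k))/f(k) for k < K and φ(K) = v_K be the (discrete) virtual values. Then the expected payment equals the expected virtual surplus: ∑_{k=1}^{K} f(k)·p(k) = ∑_{k=1}^{K} f(k)·φ(k)·a(k), where p(k) = v_k·a(k) − ∑_{l=1}^{k-1}(v_{l+1}−v_l)·a(l). -/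
/-! The payment of type `k` charges, for every lower type `l < k`, the increment
`(v (l + 1) - v l) * a l`. Summing against `f` and exchanging the order of summation,
that increment is weighted by the tail mass `∑_{k > l} f k = 1 - F l`, which is exactly
the correction term in `f l * φ l`; for `l = K` the tail is empty, matching `φ K = v K`. -/

open Finset

theorem Finset.sum_Icc_mul_sum_Ico_eq_sum_Icc_sum_Ioc_mul {R : Type*}
    [NonUnitalNonAssocSemiring R] (m n : ℕ) (f c : ℕ → R) :
    ∑ k ∈ Icc m n, f k * ∑ l ∈ Ico m k, c l = ∑ l ∈ Icc m n, (∑ k ∈ Ioc l n, f k) * c l := by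
  simp_rw [mul_sum, sum_mul]
  refine sum_comm' (fun k l => ?_)
  simp only [mem_Icc, mem_Ico, mem_Ioc]
  omega

theorem Finset.sum_Ioc_eq_sum_Icc_one_sub {M : Type*} [AddCommGroup M] (f : ℕ → M)
    {l n : ℕ} (hln : l ≤ n) :
    ∑ k ∈ Ioc l n, f k = ∑ k ∈ Icc 1 n, f k - ∑ k ∈ Icc 1 l, f k := by
  rw [eq_sub_iff_add_eq', ← zero_add 1, Icc_add_one_left_eq_Ioc, Icc_add_one_left_eq_Ioc,
    sum_Ioc_consecutive _ l.zero_le hln]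

theorem expected_payment_eq_expected_virtual_surplus_general
    (K : ℕ) (v : ℕ → ℝ)
    (f : ℕ → ℝ) (hf : ∀ k, 1 ≤ k → k ≤ K → 0 < f k) (hf1 : ∑ k ∈ Icc 1 K, f k = 1)
    (F : ℕ → ℝ) (hF : ∀ k, F k = ∑ j ∈ Icc 1 k, f j)
    (φ : ℕ → ℝ)
    (hφ : ∀ k, 1 ≤ k → k < K → φ k = v k - (v (k + 1) - v k) * (1 - F k) / f k)
    (hφK : φ K = v K)
    (a : ℕ → ℝ) (p : ℕ → ℝ)
    (hp : ∀ k, 1 ≤ k → k ≤ K →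
      p k = v k * a k - ∑ l ∈ Ico 1 k, (v (l + 1) - v l) * a l) :
    ∑ k ∈ Icc 1 K, f k * p k = ∑ k ∈ Icc 1 K, f k * φ k * a k := by
  have weighted_virtual_value : ∀ k ∈ Icc 1 K,
      f k * φ k = f k * v k - (∑ j ∈ Ioc k K, f j) * (v (k + 1) - v k) := by
    intro k hk
    obtain ⟨h1k, hkK⟩ := mem_Icc.1 hk
    rcases hkK.lt_or_eq with hkK | rfl
    · have hfk : f k ≠ 0 := (hf k h1k hkK.le).ne'
      rw [hφ k h1k hkK, sum_Ioc_eq_sum_Icc_one_sub f hkK.le, hf1, ← hF]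
      field_simp
    · rw [hφK, Ioc_self, sum_empty]
      ring
  calc ∑ k ∈ Icc 1 K, f k * p k
      = ∑ k ∈ Icc 1 K, f k * (v k * a k)
          - ∑ k ∈ Icc 1 K, f k * ∑ l ∈ Ico 1 k, (v (l + 1) - v l) * a l := by
        rw [← sum_sub_distrib]
        refine sum_congr rfl (fun k hk => ?_)
        rw [hp k (mem_Icc.1 hk).1 (mem_Icc.1 hk).2, mul_sub]
    _ = ∑ k ∈ Icc 1 K, f k * (v k * a k)
          - ∑ k ∈ Icc 1 K, (∑ j ∈ Ioc k K, f j) * ((v (k + 1) - v k) * a k) := by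
        rw [sum_Icc_mul_sum_Ico_eq_sum_Icc_sum_Ioc_mul]
    _ = ∑ k ∈ Icc 1 K, f k * φ k * a k := by
        rw [← sum_sub_distrib]
        refine sum_congr rfl (fun k hk => ?_)
        rw [weighted_virtual_value k hk]
        ring

/-- discrete Myerson lemma for a single bidder — expected payment
equals expected virtual surplus. -/
theorem expected_payment_eq_expected_virtual_surplus
    (K : ℕ) (hK : 1 ≤ K) (v : ℕ → ℝ)
    (hv : ∀ k, 1 ≤ k → k < K → v k < v (k + 1)) (hv0 : ∀ k, 1 ≤ k → k ≤ K → 0 ≤ v k)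
    (f : ℕ → ℝ) (hf : ∀ k, 1 ≤ k → k ≤ K → 0 < f k) (hf1 : ∑ k ∈ Icc 1 K, f k = 1)
    (F : ℕ → ℝ) (hF : ∀ k, F k = ∑ j ∈ Icc 1 k, f j)
    (φ : ℕ → ℝ)
    (hφ : ∀ k, 1 ≤ k → k < K → φ k = v k - (v (k + 1) - v k) * (1 - F k) / f k)
    (hφK : φ K = v K)
    (a : ℕ → ℝ) (p : ℕ → ℝ)
    (hp : ∀ k, 1 ≤ k → k ≤ K →
      p k = v k * a k - ∑ l ∈ Ico 1 k, (v (l + 1) - v l) * a l) :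
    ∑ k ∈ Icc 1 K, f k * p k = ∑ k ∈ Icc 1 K, f k * φ k * a k :=
  expected_payment_eq_expected_virtual_surplus_general K v f hf hf1 F hF φ hφ hφK a p hp
end

section
/- Let K ≥ 1, f(1),…,f(K) > 0 with cdf F, and φ the discrete virtual values φ(k) = v_k − (v_{k+1}−v_k)(1−F(k))/f(k) (with φ(K) = v_K). Then there exist unique nonnegative reals τ(2),…,τ(K) (with conventions τ(1) = τ(K+1) = 0) such that the sequence φ̃(k) := φ(k) + τ(k)/f(k) − τ(k+1)/f(k) is non-decreasing in k and, on every maximal interval [l, r] where some τ is positive, φ̃ is constant and equals the f-weighted average (∑_{j=l}^{r} φ(j) f(j)) / (∑_{j=l}^{r} f(j)); moreover ∑_k φ̃(k) f(k) = ∑_k φ(k) f(k). -/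
open Finset

/-!
Telescoping gives `∑_{j ≤ k} φ̃(j) f(j) = ∑_{j ≤ k} φ(j) f(j) - τ(k+1)`, so `τ` measures how far
the cumulative ironed welfare lies below the cumulative welfare.

Existence, by induction on `K`: the last segment of the lower convex hull starts after the index
`m < K` maximizing the `f`-average `c` of `φ` over `[m+1, K]`. Iron `[1, m]` recursively and set
`τ(k) = ∑_{j ∈ [k, K]} (c - φ(j)) f(j) ≥ 0` for `k > m`, so that `φ̃ = c` on `[m+1, K]`; at the
seam, `φ̃(m)` is an average of `φ` over a block `[l, m]`, which is at most `c` by the choice of `m`.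

Uniqueness: if `τ(m) > τ'(m)`, let `[l, r]` be the maximal block around `m` on which `τ` is
positive, so `φ̃ = c` is constant there. Comparing the sums of `φ̃ f` and `φ̃' f` over `[l, m-1]`
and `[m, r]` gives `φ̃'(m-1) > c > φ̃'(m)`, contradicting monotonicity of `φ̃'`.
-/

noncomputable def ironed (f φ τ : ℕ → ℝ) (k : ℕ) : ℝ := φ k + τ k / f k - τ (k + 1) / f k

noncomputable def weightedAvg (f φ : ℕ → ℝ) (s : Finset ℕ) : ℝ :=
  (∑ j ∈ s, φ j * f j) / ∑ j ∈ s, f j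

section WeightedAvg

variable {f φ : ℕ → ℝ} {s : Finset ℕ} {c : ℝ}

lemma sum_sub_mul_eq :
    ∑ j ∈ s, (c - φ j) * f j = c * ∑ j ∈ s, f j - ∑ j ∈ s, φ j * f j := by
  simp only [sub_mul, sum_sub_distrib, mul_sum]

lemma weightedAvg_le_iff (hs : 0 < ∑ j ∈ s, f j) :
    weightedAvg f φ s ≤ c ↔ 0 ≤ ∑ j ∈ s, (c - φ j) * f j := by
  rw [weightedAvg, div_le_iff₀ hs, sum_sub_mul_eq, sub_nonneg, mul_comm]

lemma sum_weightedAvg_sub_mul (hs : ∑ j ∈ s, f j ≠ 0) :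
    ∑ j ∈ s, (weightedAvg f φ s - φ j) * f j = 0 := by
  rw [sum_sub_mul_eq, weightedAvg, div_mul_cancel₀ _ hs, sub_self]

end WeightedAvg

section SumBounds

variable {s : Finset ℕ} {g w : ℕ → ℝ} {c : ℝ}

lemma sum_mul_le_mul_sum (hw : ∀ j ∈ s, 0 ≤ w j) (hg : ∀ j ∈ s, g j ≤ c) :
    ∑ j ∈ s, g j * w j ≤ c * ∑ j ∈ s, w j := by
  rw [mul_sum]
  exact sum_le_sum fun j hj => mul_le_mul_of_nonneg_right (hg j hj) (hw j hj)

lemma mul_sum_le_sum_mul (hw : ∀ j ∈ s, 0 ≤ w j) (hg : ∀ j ∈ s, c ≤ g j) :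
    c * ∑ j ∈ s, w j ≤ ∑ j ∈ s, g j * w j := by
  rw [mul_sum]
  exact sum_le_sum fun j hj => mul_le_mul_of_nonneg_right (hg j hj) (hw j hj)

end SumBounds

lemma sum_Icc_pos {K l r : ℕ} {f : ℕ → ℝ} (hf : ∀ k, 1 ≤ k → k ≤ K → 0 < f k) (hl : 1 ≤ l)
    (hlr : l ≤ r) (hrK : r ≤ K) : 0 < ∑ j ∈ Icc l r, f j :=
  sum_pos (fun j hj => hf j (hl.trans (mem_Icc.1 hj).1) ((mem_Icc.1 hj).2.trans hrK))
    (nonempty_Icc.2 hlr)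

lemma sum_Icc_add_sum_Icc {M : Type*} [AddCommMonoid M] (g : ℕ → M) {l m r : ℕ} (hlm : l ≤ m + 1)
    (hmr : m ≤ r) : ∑ j ∈ Icc l m, g j + ∑ j ∈ Icc (m + 1) r, g j = ∑ j ∈ Icc l r, g j := by
  simp only [← Ico_add_one_right_eq_Icc]
  exact sum_Ico_consecutive g hlm (by omega)

lemma Nat.exists_maximal_interval_not {P : ℕ → Prop} [DecidablePred P] {a m b : ℕ} (ha : P a)
    (hb : P (b + 1)) (ham : a ≤ m) (hmb : m ≤ b) :
    ∃ l r, a ≤ l ∧ l ≤ m ∧ m ≤ r ∧ r ≤ b ∧ P l ∧ P (r + 1) ∧ ∀ j, l < j → j ≤ r → ¬P j := by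
  have hex : ∃ n, m < n ∧ P n := ⟨b + 1, by omega, hb⟩
  obtain ⟨hmn, hn⟩ := Nat.find_spec hex
  have hnb : Nat.find hex ≤ b + 1 := Nat.find_min' hex ⟨by omega, hb⟩
  refine ⟨Nat.findGreatest P m, Nat.find hex - 1, Nat.le_findGreatest ham ha,
    Nat.findGreatest_le m, by omega, by omega, Nat.findGreatest_spec ham ha,
    by rwa [Nat.sub_add_cancel (by omega)], fun j hlj hjr hj => ?_⟩
  rcases le_or_gt j m with hjm | hjm
  · exact Nat.findGreatest_is_greatest hlj hjm hj
  · exact Nat.find_min hex (by omega) ⟨hjm, hj⟩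

section Ironed

variable {f φ τ τ' : ℕ → ℝ} {k l r : ℕ} {c : ℝ}

lemma ironed_mul (hk : f k ≠ 0) : ironed f φ τ k * f k = φ k * f k + (τ k - τ (k + 1)) := by
  unfold ironed
  field_simp
  ring

lemma ironed_eq_of_sub_eq (hk : f k ≠ 0) (h : τ k - τ (k + 1) = (c - φ k) * f k) :
    ironed f φ τ k = c := by
  apply mul_right_cancel₀ hk
  rw [ironed_mul hk, h]
  ring

lemma ironed_congr (h₀ : τ k = τ' k) (h₁ : τ (k + 1) = τ' (k + 1)) :
    ironed f φ τ k = ironed f φ τ' k := by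
  rw [ironed, ironed, h₀, h₁]

lemma sum_ironed_mul (hf : ∀ j ∈ Icc l r, f j ≠ 0) (hlr : l ≤ r + 1) :
    ∑ j ∈ Icc l r, ironed f φ τ j * f j = ∑ j ∈ Icc l r, φ j * f j + (τ l - τ (r + 1)) := by
  have htel := sum_Ico_sub (fun j => -τ j) hlr
  simp only [neg_sub_neg, Ico_add_one_right_eq_Icc] at htel
  rw [sum_congr rfl fun j hj => ironed_mul (hf j hj), sum_add_distrib, htel]

lemma eq_weightedAvg_of_ironed_eq (hf : ∀ j ∈ Icc l r, 0 < f j) (hlr : l ≤ r) (hl : τ l = 0)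
    (hr : τ (r + 1) = 0) (hc : ∀ j ∈ Icc l r, ironed f φ τ j = c) :
    c = weightedAvg f φ (Icc l r) := by
  have hsum := sum_ironed_mul (φ := φ) (τ := τ) (fun j hj => (hf j hj).ne') (by omega)
  rw [sum_congr rfl fun j hj => by rw [hc j hj], ← mul_sum, hl, hr, sub_zero, add_zero] at hsum
  rw [weightedAvg, eq_div_iff (sum_pos hf (nonempty_Icc.2 hlr)).ne', hsum]

lemma lt_ironed_of_ironed_eq (hf : ∀ j ∈ Icc l k, 0 < f j) (hlk : l ≤ k)
    (hc : ∀ j ∈ Icc l k, ironed f φ τ j = c)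
    (hmono : ∀ j ∈ Icc l k, ironed f φ τ' j ≤ ironed f φ τ' k) (hl : τ l ≤ τ' l)
    (hlt : τ' (k + 1) < τ (k + 1)) : c < ironed f φ τ' k := by
  have hne : ∀ j ∈ Icc l k, f j ≠ 0 := fun j hj => (hf j hj).ne'
  refine lt_of_mul_lt_mul_right ?_ (sum_pos hf (nonempty_Icc.2 hlk)).le
  calc c * ∑ j ∈ Icc l k, f j = ∑ j ∈ Icc l k, ironed f φ τ j * f j := by
        rw [mul_sum]
        exact sum_congr rfl fun j hj => by rw [hc j hj]
    _ < ∑ j ∈ Icc l k, ironed f φ τ' j * f j := by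
        rw [sum_ironed_mul hne (by omega), sum_ironed_mul hne (by omega)]
        linarith
    _ ≤ ironed f φ τ' k * ∑ j ∈ Icc l k, f j :=
        sum_mul_le_mul_sum (fun j hj => (hf j hj).le) hmono

lemma ironed_lt_of_ironed_eq (hf : ∀ j ∈ Icc k r, 0 < f j) (hkr : k ≤ r)
    (hc : ∀ j ∈ Icc k r, ironed f φ τ j = c)
    (hmono : ∀ j ∈ Icc k r, ironed f φ τ' k ≤ ironed f φ τ' j) (hr : τ (r + 1) ≤ τ' (r + 1))
    (hlt : τ' k < τ k) : ironed f φ τ' k < c := by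
  have hne : ∀ j ∈ Icc k r, f j ≠ 0 := fun j hj => (hf j hj).ne'
  refine lt_of_mul_lt_mul_right ?_ (sum_pos hf (nonempty_Icc.2 hkr)).le
  calc ironed f φ τ' k * ∑ j ∈ Icc k r, f j ≤ ∑ j ∈ Icc k r, ironed f φ τ' j * f j :=
        mul_sum_le_sum_mul (fun j hj => (hf j hj).le) hmono
    _ < ∑ j ∈ Icc k r, ironed f φ τ j * f j := by
        rw [sum_ironed_mul hne (by omega), sum_ironed_mul hne (by omega)]
        linarith
    _ = c * ∑ j ∈ Icc k r, f j := by
        rw [mul_sum]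
        exact sum_congr rfl fun j hj => by rw [hc j hj]

end Ironed

structure IsIroning (K : ℕ) (f φ τ : ℕ → ℝ) : Prop where
  support : ∀ k, (k < 2 ∨ K < k) → τ k = 0
  nonneg : ∀ k, 0 ≤ τ k
  monotone : ∀ k, 1 ≤ k → k < K → ironed f φ τ k ≤ ironed f φ τ (k + 1)
  eq_weightedAvg : ∀ l r, 1 ≤ l → r ≤ K → l ≤ r → τ l = 0 → τ (r + 1) = 0 →
    (∀ k, l < k → k ≤ r → 0 < τ k) →
    ∀ k, l ≤ k → k ≤ r → ironed f φ τ k = weightedAvg f φ (Icc l r)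

namespace IsIroning

variable {K : ℕ} {f φ τ τ' : ℕ → ℝ}

lemma zero (f φ : ℕ → ℝ) : IsIroning 0 f φ 0 :=
  ⟨fun _ _ => rfl, fun _ => le_rfl, fun _ _ _ => by omega, fun _ _ _ _ _ _ _ => by omega⟩

lemma monotoneOn (h : IsIroning K f φ τ) : MonotoneOn (ironed f φ τ) (Set.Icc 1 K) :=
  monotoneOn_of_le_add_one Set.ordConnected_Icc fun k _ hk hk' => h.monotone k hk.1 (by
    have := hk'.2
    omega)

lemma sum_ironed_mul_eq (h : IsIroning K f φ τ) (hf : ∀ k, 1 ≤ k → k ≤ K → 0 < f k) :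
    ∑ k ∈ Icc 1 K, ironed f φ τ k * f k = ∑ k ∈ Icc 1 K, φ k * f k := by
  rw [sum_ironed_mul (fun j hj => (hf j (mem_Icc.1 hj).1 (mem_Icc.1 hj).2).ne') (by omega),
    h.support 1 (by omega), h.support (K + 1) (by omega), sub_self, add_zero]

lemma exists_block (h : IsIroning K f φ τ) {m : ℕ} (hm : 1 ≤ m) (hmK : m ≤ K) :
    ∃ l r, 1 ≤ l ∧ l ≤ m ∧ m ≤ r ∧ r ≤ K ∧ τ l = 0 ∧ τ (r + 1) = 0 ∧
      ∀ j ∈ Icc l r, ironed f φ τ j = weightedAvg f φ (Icc l r) := by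
  classical
  obtain ⟨l, r, hl, hlm, hmr, hrK, hτl, hτr, hpos⟩ :=
    Nat.exists_maximal_interval_not (P := fun k => τ k = 0) (h.support 1 (by omega))
      (h.support (K + 1) (by omega)) hm hmK
  refine ⟨l, r, hl, hlm, hmr, hrK, hτl, hτr, fun j hj => ?_⟩
  exact h.eq_weightedAvg l r hl hrK (hlm.trans hmr) hτl hτr
    (fun i hli hir => (h.nonneg i).lt_of_ne' (hpos i hli hir)) j (mem_Icc.1 hj).1 (mem_Icc.1 hj).2

lemma apply_le (h : IsIroning K f φ τ) (h' : IsIroning K f φ τ')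
    (hf : ∀ k, 1 ≤ k → k ≤ K → 0 < f k) (m : ℕ) : τ m ≤ τ' m := by
  by_contra! hlt
  have hm : 0 < τ m := (h'.nonneg m).trans_lt hlt
  have hmK : 2 ≤ m ∧ m ≤ K := by
    by_contra! hout
    exact hm.ne' (h.support m (by omega))
  obtain ⟨l, r, hl, hlm, hmr, hrK, hτl, hτr, hblock⟩ := h.exists_block (by omega) hmK.2
  obtain ⟨k, rfl⟩ : ∃ k, m = k + 1 := ⟨m - 1, by omega⟩
  have hlk : l ≤ k := by
    by_contra! hkl
    obtain rfl : l = k + 1 := by omega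
    exact hm.ne' hτl
  have hpos : ∀ j ∈ Icc l r, 0 < f j := fun j hj =>
    hf j (hl.trans (mem_Icc.1 hj).1) ((mem_Icc.1 hj).2.trans hrK)
  have hmono {i j : ℕ} (hi : l ≤ i) (hij : i ≤ j) (hj : j ≤ r) :
      ironed f φ τ' i ≤ ironed f φ τ' j :=
    h'.monotoneOn ⟨hl.trans hi, by omega⟩ ⟨by omega, hj.trans hrK⟩ hij
  have hleft : weightedAvg f φ (Icc l r) < ironed f φ τ' k :=
    lt_ironed_of_ironed_eq (fun j hj => hpos j (Icc_subset_Icc le_rfl (by omega) hj)) hlk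
      (fun j hj => hblock j (Icc_subset_Icc le_rfl (by omega) hj))
      (fun j hj => hmono (mem_Icc.1 hj).1 (mem_Icc.1 hj).2 (by omega))
      (hτl ▸ h'.nonneg l) hlt
  have hright : ironed f φ τ' (k + 1) < weightedAvg f φ (Icc l r) :=
    ironed_lt_of_ironed_eq (fun j hj => hpos j (Icc_subset_Icc (by omega) le_rfl hj)) hmr
      (fun j hj => hblock j (Icc_subset_Icc (by omega) le_rfl hj))
      (fun j hj => hmono (by omega) (mem_Icc.1 hj).1 (mem_Icc.1 hj).2)
      (hτr ▸ h'.nonneg (r + 1)) hlt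
  exact (hleft.trans_le (h'.monotone k (by omega) (by omega))).not_gt hright

lemma unique (h : IsIroning K f φ τ) (h' : IsIroning K f φ τ')
    (hf : ∀ k, 1 ≤ k → k ≤ K → 0 < f k) : τ = τ' :=
  funext fun m => (h.apply_le h' hf m).antisymm (h'.apply_le h hf m)

end IsIroning

noncomputable def extendIroning (K m : ℕ) (c : ℝ) (f φ τ : ℕ → ℝ) (k : ℕ) : ℝ :=
  if k ≤ m then τ k else ∑ j ∈ Icc k K, (c - φ j) * f j

section Extend

variable {K m k : ℕ} {c : ℝ} {f φ τ : ℕ → ℝ}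

lemma extendIroning_of_le (h : IsIroning m f φ τ) (hc : ∑ j ∈ Icc (m + 1) K, (c - φ j) * f j = 0)
    (hk : k ≤ m + 1) : extendIroning K m c f φ τ k = τ k := by
  unfold extendIroning
  split_ifs with hkm
  · rfl
  · obtain rfl : k = m + 1 := by omega
    rw [hc, h.support (m + 1) (by omega)]

lemma ironed_extendIroning_of_le (h : IsIroning m f φ τ)
    (hc : ∑ j ∈ Icc (m + 1) K, (c - φ j) * f j = 0) (hk : k ≤ m) :
    ironed f φ (extendIroning K m c f φ τ) k = ironed f φ τ k :=
  ironed_congr (extendIroning_of_le h hc (by omega)) (extendIroning_of_le h hc (by omega))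

lemma ironed_extendIroning_of_lt (hf : ∀ k, 1 ≤ k → k ≤ K → 0 < f k) (hmk : m < k) (hkK : k ≤ K) :
    ironed f φ (extendIroning K m c f φ τ) k = c := by
  apply ironed_eq_of_sub_eq (hf k (by omega) hkK).ne'
  rw [extendIroning, extendIroning, if_neg (by omega), if_neg (by omega),
    ← insert_Icc_add_one_left_eq_Icc hkK, sum_insert (by simp), add_sub_cancel_right]

lemma IsIroning.ironed_le (h : IsIroning m f φ τ) (hf : ∀ k, 1 ≤ k → k ≤ m → 0 < f k)
    (hm : 1 ≤ m) (hmK : m ≤ K) (hc : ∑ j ∈ Icc (m + 1) K, (c - φ j) * f j = 0)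
    (hmax : ∀ a, 1 ≤ a → 0 ≤ ∑ j ∈ Icc a K, (c - φ j) * f j) : ironed f φ τ m ≤ c := by
  obtain ⟨l, r, hl, hlm, hmr, hrK, -, -, hblock⟩ := h.exists_block hm le_rfl
  obtain rfl : r = m := le_antisymm hrK hmr
  rw [hblock r (mem_Icc.2 ⟨hlm, le_rfl⟩), weightedAvg_le_iff (sum_Icc_pos hf hl hlm le_rfl)]
  have hsplit := sum_Icc_add_sum_Icc (fun j => (c - φ j) * f j) (by omega : l ≤ r + 1) hmK
  linarith [hmax l hl]

lemma IsIroning.extend (h : IsIroning m f φ τ) (hf : ∀ k, 1 ≤ k → k ≤ K → 0 < f k) (hmK : m < K)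
    (hc : ∑ j ∈ Icc (m + 1) K, (c - φ j) * f j = 0)
    (hmax : ∀ a, 1 ≤ a → 0 ≤ ∑ j ∈ Icc a K, (c - φ j) * f j) :
    IsIroning K f φ (extendIroning K m c f φ τ) where
  support k hk := by
    by_cases hkm : k ≤ m + 1
    · rw [extendIroning_of_le h hc hkm]
      exact h.support k (by omega)
    · rw [extendIroning, if_neg (by omega), Icc_eq_empty (by omega), sum_empty]
  nonneg k := by
    unfold extendIroning
    split_ifs
    · exact h.nonneg k
    · exact hmax k (by omega)
  monotone k hk hkK := by
    rcases lt_trichotomy k m with hkm | rfl | hkm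
    · rw [ironed_extendIroning_of_le h hc hkm.le, ironed_extendIroning_of_le h hc hkm]
      exact h.monotone k hk hkm
    · rw [ironed_extendIroning_of_le h hc le_rfl, ironed_extendIroning_of_lt hf (by omega) hkK]
      exact h.ironed_le (fun j hj hjk => hf j hj (by omega)) hk hkK.le hc hmax
    · rw [ironed_extendIroning_of_lt hf hkm hkK.le, ironed_extendIroning_of_lt hf (by omega) hkK]
  eq_weightedAvg l r hl hrK hlr hτl hτr hpos k hlk hkr := by
    by_cases hrm : r ≤ m
    · have hagree : ∀ j ≤ m + 1, extendIroning K m c f φ τ j = τ j := fun j hj =>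
        extendIroning_of_le h hc hj
      rw [ironed_extendIroning_of_le h hc (by omega)]
      refine h.eq_weightedAvg l r hl hrm hlr ?_ ?_ (fun j hlj hjr => ?_) k hlk hkr
      · rwa [hagree l (by omega)] at hτl
      · rwa [hagree (r + 1) (by omega)] at hτr
      · rw [← hagree j (by omega)]
        exact hpos j hlj hjr
    · have hml : m < l := by
        by_contra! hlm
        have := hpos (m + 1) (by omega) (by omega)
        rw [extendIroning_of_le h hc le_rfl, h.support (m + 1) (by omega)] at this
        exact this.false
      have hconst : ∀ j ∈ Icc l r, ironed f φ (extendIroning K m c f φ τ) j = c := fun j hj =>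
        ironed_extendIroning_of_lt hf (by grind) (by grind)
      rw [hconst k (mem_Icc.2 ⟨hlk, hkr⟩)]
      exact eq_weightedAvg_of_ironed_eq
        (fun j hj => hf j (by grind) (by grind)) hlr hτl hτr hconst

end Extend

lemma exists_isIroning {K : ℕ} {f : ℕ → ℝ} (φ : ℕ → ℝ) (hf : ∀ k, 1 ≤ k → k ≤ K → 0 < f k) :
    ∃ τ, IsIroning K f φ τ := by
  induction K using Nat.strong_induction_on with
  | _ K ih =>
  rcases K.eq_zero_or_pos with rfl | hK
  · exact ⟨0, IsIroning.zero f φ⟩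
  obtain ⟨m, hm, hmax⟩ := exists_max_image (range K) (fun m => weightedAvg f φ (Icc (m + 1) K))
    ⟨0, mem_range.2 hK⟩
  rw [mem_range] at hm
  obtain ⟨τ, hτ⟩ := ih m hm fun k hk hkm => hf k hk (by omega)
  refine ⟨_, hτ.extend hf hm (sum_weightedAvg_sub_mul (sum_Icc_pos hf (by omega) hm le_rfl).ne')
    fun a ha => ?_⟩
  rcases le_or_gt a K with haK | haK
  · obtain ⟨i, rfl⟩ : ∃ i, a = i + 1 := ⟨a - 1, by omega⟩
    exact (weightedAvg_le_iff (sum_Icc_pos hf ha haK le_rfl)).1 (hmax i (mem_range.2 haK))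
  · rw [Icc_eq_empty (by omega), sum_empty]

theorem ironing_exists_unique_general
    (K : ℕ) (f : ℕ → ℝ) (hf : ∀ k, 1 ≤ k → k ≤ K → 0 < f k)
    (φ : ℕ → ℝ) :
    ∃! τ : ℕ → ℝ,
      (∀ k, (k < 2 ∨ K < k) → τ k = 0) ∧
      (∀ k, 0 ≤ τ k) ∧
      -- the ironed virtual values are non-decreasing
      (∀ k, 1 ≤ k → k < K →
        φ k + τ k / f k - τ (k + 1) / f k
          ≤ φ (k + 1) + τ (k + 1) / f (k + 1) - τ (k + 2) / f (k + 1)) ∧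
      -- on every maximal interval of positive τ's, φ̃ is constant and equals
      -- the f-weighted average of φ on the interval
      (∀ l r, 1 ≤ l → r ≤ K → l ≤ r → τ l = 0 → τ (r + 1) = 0 →
        (∀ k, l < k → k ≤ r → 0 < τ k) →
        ∀ k, l ≤ k → k ≤ r →
          φ k + τ k / f k - τ (k + 1) / f k
            = (∑ j ∈ Icc l r, φ j * f j) / (∑ j ∈ Icc l r, f j)) ∧
      -- expected virtual welfare is preserved
      (∑ k ∈ Icc 1 K, (φ k + τ k / f k - τ (k + 1) / f k) * f k
        = ∑ k ∈ Icc 1 K, φ k * f k) := by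
  obtain ⟨τ, hτ⟩ := exists_isIroning φ hf
  refine ⟨τ, ⟨hτ.support, hτ.nonneg, hτ.monotone, hτ.eq_weightedAvg, hτ.sum_ironed_mul_eq hf⟩, ?_⟩
  rintro τ' ⟨hsupport, hnonneg, hmono, havg, -⟩
  exact IsIroning.unique ⟨hsupport, hnonneg, hmono, havg⟩ hτ hf

/-- ironing.  There exist unique nonnegative dual values
`τ(2),…,τ(K)` (with `τ(1) = τ(K+1) = 0`, and `τ` vanishing outside `[2,K]`)
such that the ironed virtual values `φ̃(k) = φ(k) + τ(k)/f(k) − τ(k+1)/f(k)`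
are non-decreasing, are constant and equal to the `f`-weighted average of `φ`
on every maximal interval `[l,r]` on which the intermediate `τ`'s are positive,
and preserve the expected virtual welfare. -/
theorem ironing_exists_unique
    (K : ℕ) (hK : 1 ≤ K) (v : ℕ → ℝ)
    (hv : ∀ k, 1 ≤ k → k < K → v k < v (k + 1)) (hv0 : ∀ k, 1 ≤ k → k ≤ K → 0 ≤ v k)
    (f : ℕ → ℝ) (hf : ∀ k, 1 ≤ k → k ≤ K → 0 < f k) (hf1 : ∑ k ∈ Icc 1 K, f k = 1)
    (F : ℕ → ℝ) (hF : ∀ k, F k = ∑ j ∈ Icc 1 k, f j)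
    (φ : ℕ → ℝ)
    (hφ : ∀ k, 1 ≤ k → k < K → φ k = v k - (v (k + 1) - v k) * (1 - F k) / f k)
    (hφK : φ K = v K) :
    ∃! τ : ℕ → ℝ,
      (∀ k, (k < 2 ∨ K < k) → τ k = 0) ∧
      (∀ k, 0 ≤ τ k) ∧
      -- the ironed virtual values are non-decreasing
      (∀ k, 1 ≤ k → k < K →
        φ k + τ k / f k - τ (k + 1) / f k
          ≤ φ (k + 1) + τ (k + 1) / f (k + 1) - τ (k + 2) / f (k + 1)) ∧
      -- on every maximal interval of positive τ's, φ̃ is constant and equals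
      -- the f-weighted average of φ on the interval
      (∀ l r, 1 ≤ l → r ≤ K → l ≤ r → τ l = 0 → τ (r + 1) = 0 →
        (∀ k, l < k → k ≤ r → 0 < τ k) →
        ∀ k, l ≤ k → k ≤ r →
          φ k + τ k / f k - τ (k + 1) / f k
            = (∑ j ∈ Icc l r, φ j * f j) / (∑ j ∈ Icc l r, f j)) ∧
      -- expected virtual welfare is preserved
      (∑ k ∈ Icc 1 K, (φ k + τ k / f k - τ (k + 1) / f k) * f k
        = ∑ k ∈ Icc 1 K, φ k * f k) :=
  ironing_exists_unique_general K f hf φ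
end

section
/- Consider the square (r−l+2)×(r−l+2) linear system from the ironing construction: unknowns are c and τ(l+1),…,τ(r); the k-th equation (k = l,…,r) is c = φ(k) + τ(k)/f(k) − τ(k+1)/f(k), with τ(l) = τ(r+1) = 0. The coefficient matrix has determinant of absolute value (∑_{j=l}^{r} f(j)) / (∏_{j=l}^{r} f(j)), hence the system has a unique solution, and its c-component equals c = (∑_{j=l}^{r} φ(j) f(j)) / (∑_{j=l}^{r} f(j)). -/
/-!
Scaling row `i` of the coefficient matrix by `f (l + i)` turns it into the matrix whose column `0`
is `(f l, …, f r)` and whose column `j ≥ 1` is `e (j - 1) - e j`. Replacing every row by the sum of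
itself and all rows below it (a unitriangular operation) leaves a lower triangular matrix with
diagonal `(∑ f, -1, …, -1)`, so the determinant is `± ∑ f / ∏ f`.

The `k`-th equation says `τ (k + 1) = τ k + (φ k - c) * f k`, so starting from `τ l = 0` the
unknown `τ` is forced to be the cumulative excess `∑_{l ≤ j < k} (φ j - c) * f j`. The boundary
condition `τ (r + 1) = 0` then pins `c` down as the `f`-weighted average of `φ`, and conversely
these values solve the system.
-/

open Finset

section SuffixSum
variable {m R : Type*} [Fintype m] [LinearOrder m] [CommRing R]

variable (m R) in
def suffixSumMatrix : Matrix m m R :=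
  Matrix.of fun i k => if i ≤ k then 1 else 0

theorem suffixSumMatrix_mul_apply (A : Matrix m m R) (i j : m) :
    (suffixSumMatrix m R * A) i j = ∑ k with i ≤ k, A k j := by
  simp [Matrix.mul_apply, suffixSumMatrix, Finset.sum_ite]

theorem det_suffixSumMatrix : (suffixSumMatrix m R).det = 1 := by
  rw [Matrix.det_of_isUpperTriangular]
  · simp [suffixSumMatrix]
  · intro i k hik
    simp [suffixSumMatrix, not_le.mpr (show k < i from hik)]

end SuffixSum

section ShiftDiff
variable {R : Type*} [CommRing R] {n : ℕ}

def shiftDiffMatrix (v : Fin (n + 1) → R) : Matrix (Fin (n + 1)) (Fin (n + 1)) R :=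
  Matrix.of fun i j => if j.val = 0 then v i else if j.val = i.val then -1
    else if j.val = i.val + 1 then 1 else 0

theorem shiftDiffMatrix_apply_succ (v : Fin (n + 1) → R) (k : Fin (n + 1)) (j : Fin n) :
    shiftDiffMatrix v k j.succ =
      (if k = j.castSucc then 1 else 0) - (if k = j.succ then 1 else 0) := by
  simp only [shiftDiffMatrix, Matrix.of_apply, Fin.val_succ, Nat.succ_ne_zero, if_false,
    Fin.ext_iff, Fin.val_castSucc]
  split_ifs <;> first | omega | simp

theorem suffixSumMatrix_mul_shiftDiffMatrix (v : Fin (n + 1) → R) (i j : Fin (n + 1)) :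
    (suffixSumMatrix (Fin (n + 1)) R * shiftDiffMatrix v) i j =
      if j = 0 then ∑ k with i ≤ k, v k else if j = i then -1 else 0 := by
  rw [suffixSumMatrix_mul_apply]
  cases j using Fin.cases with
  | zero => simp [shiftDiffMatrix]
  | succ j =>
    simp only [shiftDiffMatrix_apply_succ, sum_sub_distrib, sum_ite_eq', mem_filter, mem_univ,
      true_and, Fin.succ_ne_zero, if_false, Fin.le_castSucc_iff]
    simp only [Fin.lt_def, Fin.le_def, Fin.ext_iff, Fin.val_succ]
    split_ifs <;> first | omega | simp

theorem det_shiftDiffMatrix (v : Fin (n + 1) → R) :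
    (shiftDiffMatrix v).det = (-1) ^ n * ∑ i, v i := by
  have hlower : (suffixSumMatrix (Fin (n + 1)) R * shiftDiffMatrix v).IsLowerTriangular := by
    intro i j (hij : i < j)
    rw [suffixSumMatrix_mul_shiftDiffMatrix, if_neg (Fin.ne_zero_of_lt hij), if_neg hij.ne']
  calc (shiftDiffMatrix v).det
      = (suffixSumMatrix (Fin (n + 1)) R * shiftDiffMatrix v).det := by
        rw [Matrix.det_mul, det_suffixSumMatrix, one_mul]
    _ = (-1) ^ n * ∑ i, v i := by
        rw [Matrix.det_of_isLowerTriangular _ hlower, Fin.prod_univ_succ]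
        simp [suffixSumMatrix_mul_shiftDiffMatrix, mul_comm]

end ShiftDiff

section IroningMatrix
variable {K : Type*} [Field K] {n : ℕ}

def ironingMatrix (w : Fin (n + 1) → K) : Matrix (Fin (n + 1)) (Fin (n + 1)) K :=
  Matrix.of fun i j =>
    if j.val = 0 then 1
    else if j.val = i.val then -1 / w i
    else if j.val = i.val + 1 then 1 / w i
    else 0

theorem ironingMatrix_eq_diagonal_mul_shiftDiffMatrix (w : Fin (n + 1) → K) (hw : ∀ i, w i ≠ 0) :
    ironingMatrix w = Matrix.diagonal (fun i => (w i)⁻¹) * shiftDiffMatrix w := by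
  ext i j
  simp only [ironingMatrix, Matrix.diagonal_mul, shiftDiffMatrix, Matrix.of_apply]
  split_ifs <;> simp [hw i, div_eq_inv_mul]

theorem det_ironingMatrix (w : Fin (n + 1) → K) (hw : ∀ i, w i ≠ 0) :
    (ironingMatrix w).det = (-1) ^ n * (∑ i, w i) / ∏ i, w i := by
  rw [ironingMatrix_eq_diagonal_mul_shiftDiffMatrix w hw, Matrix.det_mul, Matrix.det_diagonal,
    det_shiftDiffMatrix, prod_inv_distrib]
  ring

end IroningMatrix

@[to_additive]
theorem prod_fin_eq_prod_Icc {M : Type*} [CommMonoid M] (f : ℕ → M) {l r : ℕ} (hlr : l ≤ r) :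
    ∏ i : Fin (r - l + 1), f (l + i) = ∏ j ∈ Icc l r, f j := by
  rw [Fin.prod_univ_eq_prod_range (fun i => f (l + i)), ← Ico_add_one_right_eq_Icc,
    prod_Ico_eq_prod_range, Nat.sub_add_comm hlr]

theorem eq_add_div_sub_div_iff {K : Type*} [Field K] {a b c d e : K} (he : e ≠ 0) :
    c = d + a / e - b / e ↔ b = a + (d - c) * e := by
  field_simp
  constructor <;> intro h <;> linear_combination h

section IroningSystem
variable {K : Type*} [Field K] (f φ : ℕ → K) (l r : ℕ)

def IsIroningSolution (x : K × (ℕ → K)) : Prop :=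
  (∀ k, (k < l + 1 ∨ r < k) → x.2 k = 0) ∧
    (∀ k, l ≤ k → k ≤ r → x.1 = φ k + x.2 k / f k - x.2 (k + 1) / f k)

def cumulativeExcess (c : K) (k : ℕ) : K := ∑ j ∈ Ico l k, (φ j - c) * f j

def weightedAverage : K := (∑ j ∈ Icc l r, φ j * f j) / (∑ j ∈ Icc l r, f j)

def ironingSolution : K × (ℕ → K) :=
  (weightedAverage f φ l r,
    fun k => if l < k ∧ k ≤ r then cumulativeExcess f φ l (weightedAverage f φ l r) k else 0)

variable {f φ l r}

theorem cumulativeExcess_self (c : K) : cumulativeExcess f φ l c l = 0 := by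
  simp [cumulativeExcess]

theorem cumulativeExcess_succ (c : K) {k : ℕ} (hk : l ≤ k) :
    cumulativeExcess f φ l c (k + 1) = cumulativeExcess f φ l c k + (φ k - c) * f k :=
  sum_Ico_succ_top hk _

theorem cumulativeExcess_succ_eq_zero_iff (hsum : ∑ j ∈ Icc l r, f j ≠ 0) (c : K) :
    cumulativeExcess f φ l c (r + 1) = 0 ↔ c = weightedAverage f φ l r := by
  have hsplit : cumulativeExcess f φ l c (r + 1) =
      ∑ j ∈ Icc l r, φ j * f j - c * ∑ j ∈ Icc l r, f j := by
    simp only [cumulativeExcess, Ico_add_one_right_eq_Icc, sub_mul, sum_sub_distrib, mul_sum]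
  rw [hsplit, weightedAverage, eq_div_iff hsum, sub_eq_zero, eq_comm]

theorem IsIroningSolution.snd_eq_cumulativeExcess (hf : ∀ k, l ≤ k → k ≤ r → f k ≠ 0)
    {x : K × (ℕ → K)} (hx : IsIroningSolution f φ l r x) :
    ∀ k, l ≤ k → k ≤ r + 1 → x.2 k = cumulativeExcess f φ l x.1 k := by
  intro k hlk
  induction k, hlk using Nat.le_induction with
  | base => exact fun _ => (hx.1 l (by omega)).trans (cumulativeExcess_self _).symm
  | succ k hlk ih =>
    intro hkr
    rw [cumulativeExcess_succ _ hlk, ← ih (by omega),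
      ← eq_add_div_sub_div_iff (hf k hlk (by omega))]
    exact hx.2 k hlk (by omega)

theorem IsIroningSolution.fst_eq_weightedAverage (hlr : l ≤ r)
    (hf : ∀ k, l ≤ k → k ≤ r → f k ≠ 0) (hsum : ∑ j ∈ Icc l r, f j ≠ 0)
    {x : K × (ℕ → K)} (hx : IsIroningSolution f φ l r x) :
    x.1 = weightedAverage f φ l r := by
  rw [← cumulativeExcess_succ_eq_zero_iff hsum,
    ← hx.snd_eq_cumulativeExcess hf (r + 1) (by omega) le_rfl]
  exact hx.1 _ (by omega)

theorem ironingSolution_snd_eq_cumulativeExcess (hsum : ∑ j ∈ Icc l r, f j ≠ 0) :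
    ∀ k, l ≤ k → k ≤ r + 1 →
      (ironingSolution f φ l r).2 k = cumulativeExcess f φ l (weightedAverage f φ l r) k := by
  intro k hlk hkr
  by_cases hk : l < k ∧ k ≤ r
  · exact if_pos hk
  · simp only [ironingSolution, if_neg hk]
    obtain rfl | rfl : k = l ∨ k = r + 1 := by omega
    · exact (cumulativeExcess_self _).symm
    · exact ((cumulativeExcess_succ_eq_zero_iff hsum _).mpr rfl).symm

theorem isIroningSolution_ironingSolution (hf : ∀ k, l ≤ k → k ≤ r → f k ≠ 0)
    (hsum : ∑ j ∈ Icc l r, f j ≠ 0) : IsIroningSolution f φ l r (ironingSolution f φ l r) := by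
  refine ⟨fun k hk => if_neg (by omega), fun k hlk hkr => ?_⟩
  rw [eq_add_div_sub_div_iff (hf k hlk hkr),
    ironingSolution_snd_eq_cumulativeExcess hsum k hlk (by omega),
    ironingSolution_snd_eq_cumulativeExcess hsum (k + 1) (by omega) (by omega)]
  exact cumulativeExcess_succ _ hlk

theorem IsIroningSolution.eq_ironingSolution (hlr : l ≤ r) (hf : ∀ k, l ≤ k → k ≤ r → f k ≠ 0)
    (hsum : ∑ j ∈ Icc l r, f j ≠ 0) {x : K × (ℕ → K)} (hx : IsIroningSolution f φ l r x) :
    x = ironingSolution f φ l r := by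
  have hc := hx.fst_eq_weightedAverage hlr hf hsum
  refine Prod.ext hc (funext fun k => ?_)
  by_cases hk : l < k ∧ k ≤ r
  · rw [hx.snd_eq_cumulativeExcess hf k (by omega) (by omega),
      ironingSolution_snd_eq_cumulativeExcess hsum k (by omega) (by omega), hc]
  · simp only [hx.1 k (by omega), ironingSolution, if_neg hk]

theorem existsUnique_isIroningSolution (hlr : l ≤ r) (hf : ∀ k, l ≤ k → k ≤ r → f k ≠ 0)
    (hsum : ∑ j ∈ Icc l r, f j ≠ 0) : ∃! x, IsIroningSolution f φ l r x :=
  ⟨_, isIroningSolution_ironingSolution hf hsum, fun _ hx => hx.eq_ironingSolution hlr hf hsum⟩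

end IroningSystem

theorem ironing_system_unique_solution_general
    (l r : ℕ) (hlr : l ≤ r)
    (f : ℕ → ℝ) (hf : ∀ j, l ≤ j → j ≤ r → 0 < f j) (φ : ℕ → ℝ) :
    -- coefficient matrix: row i is equation k = l+i; column 0 is the c-column,
    -- column j (j ≥ 1) is the τ(l+j)-column
    (|(Matrix.of fun i j : Fin (r - l + 1) =>
        if j.val = 0 then (1 : ℝ)
        else if j.val = i.val then -1 / f (l + i.val)
        else if j.val = i.val + 1 then 1 / f (l + i.val)
        else 0).det|
      = (∑ j ∈ Icc l r, f j) / (∏ j ∈ Icc l r, f j)) ∧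
    (∃! x : ℝ × (ℕ → ℝ),
      (∀ k, (k < l + 1 ∨ r < k) → x.2 k = 0) ∧
      (∀ k, l ≤ k → k ≤ r → x.1 = φ k + x.2 k / f k - x.2 (k + 1) / f k)) ∧
    (∀ x : ℝ × (ℕ → ℝ),
      ((∀ k, (k < l + 1 ∨ r < k) → x.2 k = 0) ∧
        (∀ k, l ≤ k → k ≤ r → x.1 = φ k + x.2 k / f k - x.2 (k + 1) / f k)) →
      x.1 = (∑ j ∈ Icc l r, φ j * f j) / (∑ j ∈ Icc l r, f j)) := by
  have hf₀ : ∀ k, l ≤ k → k ≤ r → f k ≠ 0 := fun k hlk hkr => (hf k hlk hkr).ne'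
  have hsum : 0 < ∑ j ∈ Icc l r, f j :=
    sum_pos (fun j hj => hf j (mem_Icc.1 hj).1 (mem_Icc.1 hj).2) (nonempty_Icc.2 hlr)
  have hprod : 0 < ∏ j ∈ Icc l r, f j :=
    prod_pos fun j hj => hf j (mem_Icc.1 hj).1 (mem_Icc.1 hj).2
  refine ⟨?_, existsUnique_isIroningSolution hlr hf₀ hsum.ne',
    fun _ hx => IsIroningSolution.fst_eq_weightedAverage hlr hf₀ hsum.ne' hx⟩
  change |(ironingMatrix fun i : Fin (r - l + 1) => f (l + i)).det| = _
  rw [det_ironingMatrix _ fun i => hf₀ _ (by omega) (by have := i.isLt; omega),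
    sum_fin_eq_sum_Icc f hlr, prod_fin_eq_prod_Icc f hlr, abs_div, abs_mul, abs_pow, abs_neg,
    abs_one, one_pow, one_mul, abs_of_pos hsum, abs_of_pos hprod]

/-- the square linear system of the ironing construction (unknowns
`c` and `τ(l+1),…,τ(r)`; equations `c = φ(k) + τ(k)/f(k) − τ(k+1)/f(k)` for
`k = l,…,r`, with `τ(l) = τ(r+1) = 0`).  Its coefficient matrix has determinant
of absolute value `(∑_{j=l}^r f j) / (∏_{j=l}^r f j)`, the system has a unique
solution, and the `c`-component of any solution is the `f`-weighted average of
`φ` on `[l,r]`. -/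
theorem ironing_system_unique_solution
    (l r : ℕ) (hl : 1 ≤ l) (hlr : l ≤ r)
    (f : ℕ → ℝ) (hf : ∀ j, l ≤ j → j ≤ r → 0 < f j) (φ : ℕ → ℝ) :
    -- coefficient matrix: row i is equation k = l+i; column 0 is the c-column,
    -- column j (j ≥ 1) is the τ(l+j)-column
    (|(Matrix.of fun i j : Fin (r - l + 1) =>
        if j.val = 0 then (1 : ℝ)
        else if j.val = i.val then -1 / f (l + i.val)
        else if j.val = i.val + 1 then 1 / f (l + i.val)
        else 0).det|
      = (∑ j ∈ Icc l r, f j) / (∏ j ∈ Icc l r, f j)) ∧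
    (∃! x : ℝ × (ℕ → ℝ),
      (∀ k, (k < l + 1 ∨ r < k) → x.2 k = 0) ∧
      (∀ k, l ≤ k → k ≤ r → x.1 = φ k + x.2 k / f k - x.2 (k + 1) / f k)) ∧
    (∀ x : ℝ × (ℕ → ℝ),
      ((∀ k, (k < l + 1 ∨ r < k) → x.2 k = 0) ∧
        (∀ k, l ≤ k → k ≤ r → x.1 = φ k + x.2 k / f k - x.2 (k + 1) / f k)) →
      x.1 = (∑ j ∈ Icc l r, φ j * f j) / (∑ j ∈ Icc l r, f j)) :=
  ironing_system_unique_solution_general l r hlr f hf φ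
end

section
/- In the generalized objective α·Rev + (1−α)·SW with α > 0, any optimal solution of the auction design problem must satisfy all local downward incentive constraints with equality; consequently, the payments are uniquely determined by the allocations via p_i(k, k_{-i}) = v_{i,k}·a_i(k, k_{-i}) − ∑_{l=1}^{k-1}(v_{i,l+1} − v_{i,l})·a_i(l, k_{-i}). -/
open Finset

/-- Feasible auction: pointwise allocation feasibility (`𝒜` constrains
allocations only), nonnegative allocations, local downward and upward DSIC
constraints, individual rationality at the lowest type, and monotonicity.
Values of bidder `i` are `v i 0 < v i 1 < … < v i (K i − 1)`; a profile `b`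
assigns each bidder a value index. -/
def FeasibleAuction {n : ℕ} (K : Fin n → ℕ) (hK : ∀ i, 0 < K i)
    (v : Fin n → ℕ → ℝ) (𝒜 : Set (Fin n → ℝ))
    (a p : (∀ i, Fin (K i)) → Fin n → ℝ) : Prop :=
  (∀ b, a b ∈ 𝒜) ∧
  (∀ b i, 0 ≤ a b i) ∧
  (∀ (i : Fin n) (b : ∀ j, Fin (K j)) (k : ℕ) (h : k + 1 < K i),
    v i (k + 1) * a (Function.update b i ⟨k + 1, h⟩) i
        - p (Function.update b i ⟨k + 1, h⟩) i
      ≥ v i (k + 1) * a (Function.update b i ⟨k, Nat.lt_of_succ_lt h⟩) i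
        - p (Function.update b i ⟨k, Nat.lt_of_succ_lt h⟩) i) ∧
  (∀ (i : Fin n) (b : ∀ j, Fin (K j)) (k : ℕ) (h : k + 1 < K i),
    v i k * a (Function.update b i ⟨k, Nat.lt_of_succ_lt h⟩) i
        - p (Function.update b i ⟨k, Nat.lt_of_succ_lt h⟩) i
      ≥ v i k * a (Function.update b i ⟨k + 1, h⟩) i
        - p (Function.update b i ⟨k + 1, h⟩) i) ∧
  (∀ (i : Fin n) (b : ∀ j, Fin (K j)),
    0 ≤ v i 0 * a (Function.update b i ⟨0, hK i⟩) i
        - p (Function.update b i ⟨0, hK i⟩) i) ∧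
  (∀ (i : Fin n) (b : ∀ j, Fin (K j)) (k : ℕ) (h : k + 1 < K i),
    a (Function.update b i ⟨k, Nat.lt_of_succ_lt h⟩) i
      ≤ a (Function.update b i ⟨k + 1, h⟩) i)

/-- The objective `α·Rev + (1−α)·SW`. -/
noncomputable def AuctionObjective {n : ℕ} (K : Fin n → ℕ) (α : ℝ)
    (f : (∀ i, Fin (K i)) → ℝ) (v : Fin n → ℕ → ℝ)
    (a p : (∀ i, Fin (K i)) → Fin n → ℝ) : ℝ :=
  ∑ b : ∀ i, Fin (K i),
    f b * (α * ∑ i, p b i + (1 - α) * ∑ i, v i (b i).val * a b i)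

/-!
If a local downward constraint of bidder `i` from type `t` to `t - 1` (or participation at
`t = 0`) were slack by `ε > 0` on the slice of some `b₋ᵢ`, raising `i`'s payment by `ε` at every
type `≥ t` on that slice would keep the auction feasible: the allocation is unchanged, that one
constraint tightens by `ε`, the upward constraints only loosen, and all others are unaffected.
As `α > 0` and `f > 0`, this strictly raises the objective, contradicting optimality.
So all downward constraints and the lowest-type participation constraint bind, and the payments
telescope to the discrete Myerson formula.
-/

open Function

def IsOptimalAuction {n : ℕ} (K : Fin n → ℕ) (hK : ∀ i, 0 < K i) (v : Fin n → ℕ → ℝ)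
    (𝒜 : Set (Fin n → ℝ)) (α : ℝ) (f : (∀ i, Fin (K i)) → ℝ)
    (a p : (∀ i, Fin (K i)) → Fin n → ℝ) : Prop :=
  FeasibleAuction K hK v 𝒜 a p ∧
    ∀ a' p', FeasibleAuction K hK v 𝒜 a' p' →
      AuctionObjective K α f v a' p' ≤ AuctionObjective K α f v a p

noncomputable def raisePayment {n : ℕ} {K : Fin n → ℕ} (p : (∀ i, Fin (K i)) → Fin n → ℝ)
    (i : Fin n) (b : ∀ j, Fin (K j)) (t : ℕ) (ε : ℝ) : (∀ i, Fin (K i)) → Fin n → ℝ :=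
  fun c j => p c j + if j = i ∧ update c i (b i) = b ∧ t ≤ (c i).val then ε else 0

/-- Junk value `0` for `l ≥ K i`. -/
noncomputable def typeSlice {n : ℕ} {K : Fin n → ℕ} (g : (∀ i, Fin (K i)) → Fin n → ℝ)
    (i : Fin n) (b : ∀ j, Fin (K j)) (l : ℕ) : ℝ :=
  if h : l < K i then g (update b i ⟨l, h⟩) i else 0

theorem payment_eq_of_binding {N : ℕ} {v A P : ℕ → ℝ} (h0 : v 0 * A 0 - P 0 = 0)
    (hstep : ∀ k, k + 1 < N → v (k + 1) * A (k + 1) - P (k + 1) = v (k + 1) * A k - P k) :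
    ∀ m < N, P m = v m * A m - ∑ l ∈ range m, (v (l + 1) - v l) * A l := by
  intro m hm
  induction m with
  | zero => simp only [range_zero, sum_empty]; linarith
  | succ k ih =>
    rw [sum_range_succ]
    linarith [hstep k hm, ih (by omega)]

section

variable {n : ℕ} {K : Fin n → ℕ}

theorem typeSlice_of_lt (g : (∀ i, Fin (K i)) → Fin n → ℝ) {i : Fin n} (b : ∀ j, Fin (K j))
    {l : ℕ} (h : l < K i) : typeSlice g i b l = g (update b i ⟨l, h⟩) i :=
  dif_pos h

theorem typeSlice_self (g : (∀ i, Fin (K i)) → Fin n → ℝ) (i : Fin n) (b : ∀ j, Fin (K j)) :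
    typeSlice g i b (b i).val = g b i := by
  simp [typeSlice]

theorem auctionObjective_lt_of_payment_lt {α : ℝ} {f : (∀ i, Fin (K i)) → ℝ}
    {v : Fin n → ℕ → ℝ} {a p p' : (∀ i, Fin (K i)) → Fin n → ℝ} (hα : 0 < α)
    (hf : ∀ b, 0 < f b) (hle : ∀ b i, p b i ≤ p' b i) (hlt : ∃ b i, p b i < p' b i) :
    AuctionObjective K α f v a p < AuctionObjective K α f v a p' := by
  obtain ⟨b₀, i₀, hlt₀⟩ := hlt
  have revenue_le (b) : α * ∑ i, p b i ≤ α * ∑ i, p' b i :=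
    mul_le_mul_of_nonneg_left (sum_le_sum fun i _ => hle b i) hα.le
  have revenue_lt : α * ∑ i, p b₀ i < α * ∑ i, p' b₀ i :=
    mul_lt_mul_of_pos_left (sum_lt_sum (fun i _ => hle b₀ i) ⟨i₀, mem_univ _, hlt₀⟩) hα
  refine sum_lt_sum (fun b _ => ?_) ⟨b₀, mem_univ _, ?_⟩
  · exact mul_le_mul_of_nonneg_left (by linarith [revenue_le b]) (hf b).le
  · exact mul_lt_mul_of_pos_left (by linarith) (hf b₀)

variable {p : (∀ i, Fin (K i)) → Fin n → ℝ} {i : Fin n} {b : ∀ j, Fin (K j)} {t : ℕ} {ε : ℝ}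

theorem raisePayment_of_ne {j : Fin n} (hj : j ≠ i) (c : ∀ j, Fin (K j)) :
    raisePayment p i b t ε c j = p c j := by
  simp [raisePayment, hj]

theorem raisePayment_update (b' : ∀ j, Fin (K j)) (x : Fin (K i)) :
    raisePayment p i b t ε (update b' i x) i =
      p (update b' i x) i + if update b' i (b i) = b ∧ t ≤ x.val then ε else 0 := by
  simp [raisePayment]

theorem le_raisePayment (hε : 0 ≤ ε) (c : ∀ j, Fin (K j)) (j : Fin n) :
    p c j ≤ raisePayment p i b t ε c j := by
  unfold raisePayment
  split_ifs <;> linarith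

theorem lt_raisePayment_update (ht : t < K i) (hε : 0 < ε) :
    p (update b i ⟨t, ht⟩) i < raisePayment p i b t ε (update b i ⟨t, ht⟩) i := by
  simp [raisePayment_update, hε]

theorem feasibleAuction_raisePayment {hK : ∀ i, 0 < K i} {v : Fin n → ℕ → ℝ}
    {𝒜 : Set (Fin n → ℝ)} {a : (∀ i, Fin (K i)) → Fin n → ℝ}
    (h : FeasibleAuction K hK v 𝒜 a p) (hε : 0 ≤ ε)
    (hdown : ∀ k (hk : k + 1 < K i), t = k + 1 →
      ε ≤ v i (k + 1) * a (update b i ⟨k + 1, hk⟩) i - p (update b i ⟨k + 1, hk⟩) i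
        - (v i (k + 1) * a (update b i ⟨k, Nat.lt_of_succ_lt hk⟩) i
          - p (update b i ⟨k, Nat.lt_of_succ_lt hk⟩) i))
    (hIR : t = 0 → ε ≤ v i 0 * a (update b i ⟨0, hK i⟩) i - p (update b i ⟨0, hK i⟩) i) :
    FeasibleAuction K hK v 𝒜 a (raisePayment p i b t ε) := by
  obtain ⟨hmem, hnonneg, hdown₀, hup₀, hIR₀, hmono⟩ := h
  have on_slice (b' : ∀ j, Fin (K j)) (hb' : update b' i (b i) = b) (x : Fin (K i)) :
      update b' i x = update b i x := by
    rw [← hb', update_idem]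
  refine ⟨hmem, hnonneg, fun j b' k hk => ?_, fun j b' k hk => ?_, fun j b' => ?_, hmono⟩
  · obtain rfl | hj := eq_or_ne j i
    · have := hdown₀ j b' k hk
      simp only [raisePayment_update]
      split_ifs with hk₁ hk₀ hk₀
      · linarith
      · have ht : t = k + 1 := by
          have : ¬ t ≤ k := fun htk => hk₀ ⟨hk₁.1, htk⟩
          omega
        simp only [on_slice b' hk₁.1] at this ⊢
        linarith [hdown k hk ht]
      · exact absurd ⟨hk₀.1, by omega⟩ hk₁
      · linarith
    · simp only [raisePayment_of_ne hj]
      exact hdown₀ j b' k hk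
  · obtain rfl | hj := eq_or_ne j i
    · have := hup₀ j b' k hk
      simp only [raisePayment_update]
      split_ifs with hk₀ hk₁ hk₁
      · linarith
      · exact absurd ⟨hk₀.1, by omega⟩ hk₁
      · linarith
      · linarith
    · simp only [raisePayment_of_ne hj]
      exact hup₀ j b' k hk
  · obtain rfl | hj := eq_or_ne j i
    · have := hIR₀ j b'
      simp only [raisePayment_update]
      split_ifs with h₀
      · simp only [on_slice b' h₀.1] at this ⊢
        linarith [hIR (by omega)]
      · linarith
    · simp only [raisePayment_of_ne hj]
      exact hIR₀ j b'

namespace IsOptimalAuction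

variable {hK : ∀ i, 0 < K i} {v : Fin n → ℕ → ℝ} {𝒜 : Set (Fin n → ℝ)} {α : ℝ}
  {f : (∀ i, Fin (K i)) → ℝ} {a : (∀ i, Fin (K i)) → Fin n → ℝ}

theorem raisePayment_infeasible (h : IsOptimalAuction K hK v 𝒜 α f a p) (hα : 0 < α)
    (hf : ∀ b, 0 < f b) (ht : t < K i) (hε : 0 < ε) :
    ¬ FeasibleAuction K hK v 𝒜 a (raisePayment p i b t ε) := fun h' =>
  (h.2 a _ h').not_gt <| auctionObjective_lt_of_payment_lt hα hf (le_raisePayment hε.le)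
    ⟨_, i, lt_raisePayment_update ht hε⟩

theorem downward_binds (h : IsOptimalAuction K hK v 𝒜 α f a p) (hα : 0 < α)
    (hf : ∀ b, 0 < f b) (i : Fin n) (b : ∀ j, Fin (K j)) (k : ℕ) (hk : k + 1 < K i) :
    v i (k + 1) * a (update b i ⟨k + 1, hk⟩) i - p (update b i ⟨k + 1, hk⟩) i
      = v i (k + 1) * a (update b i ⟨k, Nat.lt_of_succ_lt hk⟩) i
        - p (update b i ⟨k, Nat.lt_of_succ_lt hk⟩) i := by
  refine le_antisymm ?_ (h.1.2.2.1 i b k hk)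
  by_contra! hslack
  refine h.raisePayment_infeasible (b := b) hα hf hk (sub_pos.2 hslack)
    (feasibleAuction_raisePayment h.1 (sub_pos.2 hslack).le (fun k' hk' hkk' => ?_) (by omega))
  obtain rfl : k' = k := by omega
  exact le_rfl

theorem lowest_participation_binds (h : IsOptimalAuction K hK v 𝒜 α f a p) (hα : 0 < α)
    (hf : ∀ b, 0 < f b) (i : Fin n) (b : ∀ j, Fin (K j)) :
    v i 0 * a (update b i ⟨0, hK i⟩) i - p (update b i ⟨0, hK i⟩) i = 0 := by
  refine le_antisymm ?_ (h.1.2.2.2.2.1 i b)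
  by_contra! hslack
  exact h.raisePayment_infeasible (b := b) hα hf (hK i) hslack
    (feasibleAuction_raisePayment h.1 hslack.le (fun _ _ _ => by omega) fun _ => le_rfl)

theorem payment_eq (h : IsOptimalAuction K hK v 𝒜 α f a p) (hα : 0 < α) (hf : ∀ b, 0 < f b)
    (i : Fin n) (b : ∀ j, Fin (K j)) :
    p b i = v i (b i).val * a b i
      - ∑ l ∈ (range (b i).val).attach, (v i (l.val + 1) - v i l.val) *
          a (update b i ⟨l.val, Nat.lt_trans (mem_range.mp l.2) (b i).isLt⟩) i := by
  have myerson := payment_eq_of_binding (v := v i) (A := typeSlice a i b) (P := typeSlice p i b)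
    (by simpa only [typeSlice_of_lt _ _ (hK i)] using h.lowest_participation_binds hα hf i b)
    (fun k hk => by
      simpa only [typeSlice_of_lt _ _ hk, typeSlice_of_lt _ _ (Nat.lt_of_succ_lt hk)]
        using h.downward_binds hα hf i b k hk)
    (b i).val (b i).isLt
  rw [typeSlice_self, typeSlice_self, ← sum_attach] at myerson
  rw [myerson]
  congr 1
  exact sum_congr rfl fun l _ => by rw [typeSlice_of_lt]

end IsOptimalAuction

end

theorem optimal_auction_downward_binding_and_payment_formula_general
    {n : ℕ} (K : Fin n → ℕ) (hK : ∀ i, 0 < K i)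
    (v : Fin n → ℕ → ℝ)
    (f : (∀ i, Fin (K i)) → ℝ) (hf : ∀ b, 0 < f b)
    (𝒜 : Set (Fin n → ℝ))
    (α : ℝ) (hα : 0 < α)
    (a p : (∀ i, Fin (K i)) → Fin n → ℝ)
    (hfeas : FeasibleAuction K hK v 𝒜 a p)
    (hopt : ∀ a' p', FeasibleAuction K hK v 𝒜 a' p' →
      AuctionObjective K α f v a' p' ≤ AuctionObjective K α f v a p) :
    -- all local downward constraints bind …
    (∀ (i : Fin n) (b : ∀ j, Fin (K j)) (k : ℕ) (h : k + 1 < K i),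
      v i (k + 1) * a (Function.update b i ⟨k + 1, h⟩) i
          - p (Function.update b i ⟨k + 1, h⟩) i
        = v i (k + 1) * a (Function.update b i ⟨k, Nat.lt_of_succ_lt h⟩) i
          - p (Function.update b i ⟨k, Nat.lt_of_succ_lt h⟩) i) ∧
    -- … hence payments are given by the discrete Myerson payment formula
    (∀ (i : Fin n) (b : ∀ j, Fin (K j)),
      p b i = v i (b i).val * a b i
        - ∑ l ∈ (Finset.range (b i).val).attach,
            (v i (l.val + 1) - v i l.val) *
              a (Function.update b i
                  ⟨l.val, Nat.lt_trans (Finset.mem_range.mp l.2) (b i).isLt⟩) i) := by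
  have h : IsOptimalAuction K hK v 𝒜 α f a p := ⟨hfeas, hopt⟩
  exact ⟨h.downward_binds hα hf, h.payment_eq hα hf⟩

/-- for `α > 0`, any optimal auction satisfies all local downward
incentive constraints with equality, and hence its payments are uniquely
determined by the allocations via the discrete Myerson payment formula. -/
theorem optimal_auction_downward_binding_and_payment_formula
    {n : ℕ} (K : Fin n → ℕ) (hK : ∀ i, 0 < K i)
    (v : Fin n → ℕ → ℝ)
    (hv : ∀ i k, k + 1 < K i → v i k < v i (k + 1))
    (hv0 : ∀ i k, k < K i → 0 ≤ v i k)
    (f : (∀ i, Fin (K i)) → ℝ) (hf : ∀ b, 0 < f b)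
    (𝒜 : Set (Fin n → ℝ)) (h𝒜 : Convex ℝ 𝒜)
    (α : ℝ) (hα : 0 < α) (hα1 : α ≤ 1)
    (a p : (∀ i, Fin (K i)) → Fin n → ℝ)
    (hfeas : FeasibleAuction K hK v 𝒜 a p)
    (hopt : ∀ a' p', FeasibleAuction K hK v 𝒜 a' p' →
      AuctionObjective K α f v a' p' ≤ AuctionObjective K α f v a p) :
    -- all local downward constraints bind …
    (∀ (i : Fin n) (b : ∀ j, Fin (K j)) (k : ℕ) (h : k + 1 < K i),
      v i (k + 1) * a (Function.update b i ⟨k + 1, h⟩) i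
          - p (Function.update b i ⟨k + 1, h⟩) i
        = v i (k + 1) * a (Function.update b i ⟨k, Nat.lt_of_succ_lt h⟩) i
          - p (Function.update b i ⟨k, Nat.lt_of_succ_lt h⟩) i) ∧
    -- … hence payments are given by the discrete Myerson payment formula
    (∀ (i : Fin n) (b : ∀ j, Fin (K j)),
      p b i = v i (b i).val * a b i
        - ∑ l ∈ (Finset.range (b i).val).attach,
            (v i (l.val + 1) - v i l.val) *
              a (Function.update b i
                  ⟨l.val, Nat.lt_trans (Finset.mem_range.mp l.2) (b i).isLt⟩) i) :=
  optimal_auction_downward_binding_and_payment_formula_general K hK v f hf 𝒜 α hα a p hfeas hopt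
end
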